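/- Suppose f* ∈ H, a positive integer k with 1 ≤ k ≤ n+1, elements a₁,…,a_k ∈ A, points x₁,…,x_k ∈ X and positive real numbers λ₁,…,λ_k with λ₁+⋯+λ_k = 1 satisfy: (i) Σ_{i=1}^{k} λᵢ ‖f_{aᵢ}(xᵢ) − f*(xᵢ)‖ ≤ Σ_{i=1}^{k} λᵢ ‖f_{aᵢ}(xᵢ) − f(xᵢ)‖ for all f ∈ H; and (ii) ‖f_{aᵢ}(xᵢ) − f*(xᵢ)‖ = |||f_{aᵢ} − f*||| = max_{a∈A} |||f_a − f*||| for all i with 1 ≤ i ≤ k. Then f* is a best simultaneous approximation (BSA) to {f_a}_{a∈A} from H, i.e., max_{a∈A} |||f_a − f*||| ≤ max_{a∈A} |||f_a − f||| for all f ∈ H. -/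
import Mathlib

/-- **Sufficiency part of the characterization of a BSA in `C(X, Y)`.**
If `f⋆ ∈ H`, `a₁, …, a_k ∈ A`, `x₁, …, x_k ∈ X` and positive `λ₁, …, λ_k` with
sum one satisfy conditions (i) and (ii), then `f⋆` is a best simultaneous
approximation to `{f_a}_{a ∈ A}` from `H`. -/
theorem bsa_sufficiency_CXY
    {X : Type*} [TopologicalSpace X] [CompactSpace X] [T2Space X]
    {Y : Type*} [NormedAddCommGroup Y] [NormedSpace ℝ Y]
    {A : Type*} [TopologicalSpace A] [CompactSpace A] [T2Space A] [Nonempty A]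
    {n : ℕ} (hn : 0 < n)
    (H : Submodule ℝ C(X, Y)) (hH : Module.finrank ℝ H = n)
    (F : A → C(X, Y)) (hF : Continuous F)
    (fs : C(X, Y)) (hfs : fs ∈ H)
    (k : ℕ) (hk1 : 1 ≤ k) (hk2 : k ≤ n + 1)
    (a : Fin k → A) (x : Fin k → X) (lam : Fin k → ℝ)
    (hlam : ∀ i, 0 < lam i) (hsum : (∑ i, lam i) = 1)
    (hi : ∀ f ∈ H, (∑ i, lam i * ‖F (a i) (x i) - fs (x i)‖) ≤
        ∑ i, lam i * ‖F (a i) (x i) - f (x i)‖)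
    (hii : ∀ i, ‖F (a i) (x i) - fs (x i)‖ = ‖F (a i) - fs‖ ∧
        ‖F (a i) - fs‖ = ⨆ b : A, ‖F b - fs‖) :
    ∀ f ∈ H, (⨆ a : A, ‖F a - fs‖) ≤ ⨆ a : A, ‖F a - f‖ := by
  intro f hf
  have hbdd : BddAbove (Set.range fun b : A => ‖F b - f‖) :=
    (isCompact_range ((continuous_norm.comp (hF.sub continuous_const)))).bddAbove
  have hM : ∀ i, ‖F (a i) (x i) - fs (x i)‖ = ⨆ b : A, ‖F b - fs‖ :=
    fun i => (hii i).1.trans (hii i).2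
  calc (⨆ b : A, ‖F b - fs‖)
      = ∑ i, lam i * ‖F (a i) (x i) - fs (x i)‖ := by
        simp_rw [hM, ← Finset.sum_mul, hsum, one_mul]
    _ ≤ ∑ i, lam i * ‖F (a i) (x i) - f (x i)‖ := hi f hf
    _ ≤ ∑ i, lam i * (⨆ b : A, ‖F b - f‖) := by
        refine Finset.sum_le_sum fun i _ => mul_le_mul_of_nonneg_left ?_ (hlam i).le
        have h1 : ‖F (a i) (x i) - f (x i)‖ ≤ ‖F (a i) - f‖ := by
          simpa using (F (a i) - f).norm_coe_le_norm (x i)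
        exact h1.trans (le_ciSup hbdd (a i))
    _ = ⨆ b : A, ‖F b - f‖ := by rw [← Finset.sum_mul, hsum, one_mul]
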